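/- arXiv:1609.07682 — 6 statements merged into one kernel-verified Lean document; each statement's English description precedes it below -/
import Mathlib

section
/- For every v ∈ (0,1] and every x ≥ 0, the limit H(x) := lim_{n→∞} f_n(x/b^n) exists, is nonnegative, and satisfies H(x) ≤ x. -/
open Set Filter Topology

/-!
Since `f (y / b) ≤ y` for `y ≥ 0` and `f` is monotone on `[0, ∞)`, each term
`f^[n+1] (x / b^(n+1)) = f^[n] (f (x / b^n / b))` is at most `f^[n] (x / b^n)`.
The sequence is therefore nonincreasing, starts at `x` and stays nonnegative, so it converges
to a limit in `[0, x]`.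
-/

theorem MonotoneOn.iterate {α : Type*} [Preorder α] {f : α → α} {s : Set α}
    (hmaps : MapsTo f s s) (hmono : MonotoneOn f s) (n : ℕ) : MonotoneOn f^[n] s := by
  induction n with
  | zero => exact monotoneOn_id
  | succ n ih =>
    intro a ha c hc hac
    simp only [Function.iterate_succ_apply]
    exact ih (hmaps ha) (hmaps hc) (hmono ha hc hac)

section IterateDivPow

variable {f : ℝ → ℝ} {b x : ℝ}

theorem antitone_iterate_div_pow (hmaps : MapsTo f (Ici 0) (Ici 0))
    (hmono : MonotoneOn f (Ici 0)) (hb : 0 < b) (hstep : ∀ y, 0 ≤ y → f (y / b) ≤ y)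
    (hx : 0 ≤ x) : Antitone fun n : ℕ => f^[n] (x / b ^ n) := by
  refine antitone_nat_of_succ_le fun n => ?_
  have hxn : 0 ≤ x / b ^ n := by positivity
  have hdiv : x / b ^ (n + 1) = x / b ^ n / b := by rw [pow_succ, div_div]
  calc f^[n + 1] (x / b ^ (n + 1)) = f^[n] (f (x / b ^ n / b)) := by
        rw [Function.iterate_succ_apply, hdiv]
    _ ≤ f^[n] (x / b ^ n) :=
        MonotoneOn.iterate hmaps hmono n (hmaps (div_nonneg hxn hb.le)) hxn (hstep _ hxn)

theorem exists_tendsto_iterate_div_pow (hmaps : MapsTo f (Ici 0) (Ici 0))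
    (hmono : MonotoneOn f (Ici 0)) (hb : 0 < b) (hstep : ∀ y, 0 ≤ y → f (y / b) ≤ y)
    (hx : 0 ≤ x) :
    ∃ L, 0 ≤ L ∧ L ≤ x ∧ Tendsto (fun n : ℕ => f^[n] (x / b ^ n)) atTop (𝓝 L) := by
  have hanti := antitone_iterate_div_pow hmaps hmono hb hstep hx
  have hnonneg : ∀ n : ℕ, 0 ≤ f^[n] (x / b ^ n) := fun n =>
    hmaps.iterate n (show x / b ^ n ∈ Ici 0 from div_nonneg hx (pow_nonneg hb.le n))
  have hlim := tendsto_atTop_ciInf hanti ⟨0, forall_mem_range.2 hnonneg⟩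
  refine ⟨_, ge_of_tendsto' hlim hnonneg, ?_, hlim⟩
  simpa using hanti.le_of_tendsto hlim 0

end IterateDivPow

section SaturatingMap

variable {v : ℝ}

theorem mapsTo_add_mul_div_one_add (hv : 0 ≤ v) :
    MapsTo (fun x : ℝ => x + v * x / (1 + x)) (Ici 0) (Ici 0) := fun x (hx : 0 ≤ x) => by
  simp only [mem_Ici]
  positivity

theorem monotoneOn_add_mul_div_one_add (hv : 0 ≤ v) :
    MonotoneOn (fun x : ℝ => x + v * x / (1 + x)) (Ici 0) := by
  intro a (ha : 0 ≤ a) c (hc : 0 ≤ c) hac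
  have hfrac : v * a / (1 + a) ≤ v * c / (1 + c) := by
    rw [div_le_div_iff₀ (by linarith) (by linarith)]
    nlinarith
  dsimp only
  linarith

theorem add_mul_div_one_add_div_le (hv : 0 ≤ v) {y : ℝ} (hy : 0 ≤ y) :
    y / (1 + v) + v * (y / (1 + v)) / (1 + y / (1 + v)) ≤ y := by
  have hz : 0 ≤ y / (1 + v) := by positivity
  have hfrac : v * (y / (1 + v)) / (1 + y / (1 + v)) ≤ v * (y / (1 + v)) :=
    div_le_self (by positivity) (by linarith)
  have hsplit : y / (1 + v) + v * (y / (1 + v)) = y := by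
    field_simp
  linarith

end SaturatingMap

/-- For every `v ∈ (0,1]` and every `x ≥ 0`, the limit `H(x) = lim_n f^[n](x/b^n)`
exists, is nonnegative, and satisfies `H(x) ≤ x`. -/
theorem pcr_H_exists (v : ℝ) (hv : v ∈ Set.Ioc (0:ℝ) 1)
    (b : ℝ) (hb : b = 1 + v)
    (f : ℝ → ℝ) (hf : ∀ x, f x = x + v * x / (1 + x)) :
    ∀ x : ℝ, 0 ≤ x → ∃ L : ℝ, 0 ≤ L ∧ L ≤ x ∧
      Tendsto (fun n : ℕ => f^[n] (x / b ^ n)) atTop (𝓝 L) := by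
  obtain rfl : f = fun x => x + v * x / (1 + x) := funext hf
  subst hb
  have hv0 : 0 ≤ v := hv.1.le
  intro x hx
  exact exists_tendsto_iterate_div_pow (mapsTo_add_mul_div_one_add hv0)
    (monotoneOn_add_mul_div_one_add hv0) (by linarith)
    (fun _ hy => add_mul_div_one_add_div_le hv0 hy) hx
end

section
/- For every v ∈ (0,1], every n ≥ 0 and every x ≥ 0, the successive approximants to H satisfy 0 ≤ f_n(x/b^n) − f_{n+1}(x/b^{n+1}) ≤ v x² b^{−n}. -/
open Set

lemma pcr_aux (v : ℝ) (hv0 : 0 < v) (b : ℝ) (hb : b = 1 + v)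
    (f : ℝ → ℝ) (hf : ∀ x, f x = x + v * x / (1 + x)) :
    ∀ n : ℕ, ∀ A B : ℝ, 0 ≤ B → B ≤ A →
      0 ≤ f^[n] B ∧ f^[n] B ≤ f^[n] A ∧ f^[n] A - f^[n] B ≤ b ^ n * (A - B) := by
  intro n
  induction n with
  | zero => intro A B hB hBA; simp; constructor <;> linarith
  | succ n ih =>
    intro A B hB hBA
    have hA : 0 ≤ A := le_trans hB hBA
    have h1B : (0:ℝ) < 1 + B := by linarith
    have h1A : (0:ℝ) < 1 + A := by linarith
    have key : f A - f B = (A - B) + v * (A - B) / ((1 + A) * (1 + B)) := by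
      rw [hf, hf]; field_simp; ring
    have hden : (1:ℝ) ≤ (1 + A) * (1 + B) := by nlinarith
    have hnum : 0 ≤ v * (A - B) := by nlinarith
    have hdiv1 : 0 ≤ v * (A - B) / ((1 + A) * (1 + B)) := by positivity
    have hdiv2 : v * (A - B) / ((1 + A) * (1 + B)) ≤ v * (A - B) :=
      div_le_self hnum hden
    have hfB : 0 ≤ f B := by
      rw [hf]; positivity
    have hfBA : f B ≤ f A := by linarith
    have hfLip : f A - f B ≤ b * (A - B) := by rw [hb]; nlinarith
    obtain ⟨h1, h2, h3⟩ := ih (f A) (f B) hfB hfBA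
    rw [Function.iterate_succ_apply, Function.iterate_succ_apply]
    refine ⟨h1, h2, ?_⟩
    have hbn : (0:ℝ) ≤ b ^ n := by rw [hb]; positivity
    calc f^[n] (f A) - f^[n] (f B) ≤ b ^ n * (f A - f B) := h3
      _ ≤ b ^ n * (b * (A - B)) := by nlinarith
      _ = b ^ (n+1) * (A - B) := by ring

/-- For every `v ∈ (0,1]`, every `n ≥ 0` and every `x ≥ 0`, the successive
approximants to `H` satisfy `0 ≤ f^[n](x/b^n) − f^[n+1](x/b^(n+1)) ≤ v x² b^(−n)`. -/
theorem pcr_approximant_gap (v : ℝ) (hv : v ∈ Set.Ioc (0:ℝ) 1)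
    (b : ℝ) (hb : b = 1 + v)
    (f : ℝ → ℝ) (hf : ∀ x, f x = x + v * x / (1 + x)) :
    ∀ n : ℕ, ∀ x : ℝ, 0 ≤ x →
      0 ≤ f^[n] (x / b ^ n) - f^[n + 1] (x / b ^ (n + 1)) ∧
      f^[n] (x / b ^ n) - f^[n + 1] (x / b ^ (n + 1)) ≤ v * x ^ 2 * (b ^ n)⁻¹ := by
  obtain ⟨hv0, hv1⟩ := hv
  intro n x hx
  have hb0 : (0:ℝ) < b := by rw [hb]; linarith
  have hb1 : (1:ℝ) ≤ b := by rw [hb]; linarith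
  set u : ℝ := x / b ^ (n+1) with hu
  have hu0 : 0 ≤ u := by positivity
  have h1u : (0:ℝ) < 1 + u := by linarith
  have hA : x / b ^ n = b * u := by
    rw [hu, pow_succ]; field_simp
  have hfu0 : 0 ≤ f u := by rw [hf]; positivity
  have hgap : b * u - f u = v * u ^ 2 / (1 + u) := by
    rw [hf, hb]; field_simp; ring
  have hgap0 : 0 ≤ b * u - f u := by rw [hgap]; positivity
  have hgap2 : b * u - f u ≤ v * u ^ 2 := by
    rw [hgap]; exact div_le_self (by positivity) (by linarith)
  obtain ⟨h1, h2, h3⟩ := pcr_aux v hv0 b hb f hf n (b * u) (f u) hfu0 (by linarith)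
  rw [Function.iterate_succ_apply, hA]
  constructor
  · linarith
  · have hbn : (0:ℝ) < b ^ n := by positivity
    have hb2 : (0:ℝ) < b ^ (n+2) := by positivity
    have hbu2 : u ^ 2 = x ^ 2 / b ^ (2*n+2) := by
      rw [hu, div_pow, ← pow_mul]; ring_nf
    have hle : b ^ n * (b ^ (2*n+2))⁻¹ ≤ (b ^ n)⁻¹ := by
      have h2n : b ^ n * b ^ n ≤ b ^ (2*n+2) := by
        rw [← pow_add]; exact pow_le_pow_right₀ hb1 (by omega)
      have e1 : b ^ (2*n+2) * (b ^ (2*n+2))⁻¹ = 1 := mul_inv_cancel₀ (by positivity)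
      have e2 : b ^ n * (b ^ n)⁻¹ = 1 := mul_inv_cancel₀ (ne_of_gt hbn)
      have p1 : (0:ℝ) < (b ^ (2*n+2))⁻¹ := by positivity
      have p2 : (0:ℝ) < (b ^ n)⁻¹ := by positivity
      nlinarith [mul_pos p1 p2]
    have hmain : b ^ n * (v * u ^ 2) ≤ v * x ^ 2 * (b ^ n)⁻¹ := by
      have : b ^ n * (v * u ^ 2) = v * x ^ 2 * (b ^ n * (b ^ (2*n+2))⁻¹) := by
        rw [hbu2, div_eq_mul_inv]; ring
      rw [this]
      exact mul_le_mul_of_nonneg_left hle (by positivity)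
    calc f^[n] (b * u) - f^[n] (f u) ≤ b ^ n * (b * u - f u) := h3
      _ ≤ b ^ n * (v * u ^ 2) := by nlinarith
      _ ≤ v * x ^ 2 * (b ^ n)⁻¹ := hmain
end

section
/- For every v ∈ (0,1], the functions H_n(x) := f_n(x/b^n) converge uniformly on every bounded interval [0,M] to H(x) := lim_{n→∞} f_n(x/b^n), and consequently H is continuous on [0,∞). -/
/-!
The map `f` fixes `0`, has slope `f'(0) = 1 + v = b` there and is `b`-Lipschitz on `[0, ∞)`,
so `f_n` is `b ^ n`-Lipschitz. Since `b y - f y = v y² / (1 + y) ≤ v y²`, consecutive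
rescaled iterates satisfy `|H_n x - H_{n+1} x| ≤ b ^ n · v (x / b ^ (n+1))² = (v x² / b²) b⁻ⁿ`,
a geometric bound that is uniform for `x ∈ [0, M]`; hence `H_n → H` uniformly there, and
`H` is continuous as a locally uniform limit of the continuous functions `H_n`.
-/

open Set Filter Topology NNReal

theorem LipschitzOnWith.iterate {α : Type*} [PseudoEMetricSpace α] {K : ℝ≥0} {f : α → α}
    {s : Set α} (hf : LipschitzOnWith K f s) (hs : MapsTo f s s) :
    ∀ n : ℕ, LipschitzOnWith (K ^ n) f^[n] s
  | 0 => by simpa using LipschitzWith.id.lipschitzOnWith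
  | n + 1 => by
    rw [pow_succ', Function.iterate_succ']
    exact hf.comp (hf.iterate hs n) (hs.iterate n)

theorem tendstoUniformlyOn_of_dist_succ_le_geometric {α β : Type*} [PseudoMetricSpace β]
    {F : ℕ → α → β} {G : α → β} {s : Set α} {C r : ℝ} (hr₀ : 0 ≤ r) (hr : r < 1)
    (hstep : ∀ n, ∀ x ∈ s, dist (F n x) (F (n + 1) x) ≤ C * r ^ n)
    (hlim : ∀ x ∈ s, Tendsto (fun n => F n x) atTop (𝓝 (G x))) :
    TendstoUniformlyOn F G atTop s := by
  have hbound : Tendsto (fun n : ℕ => C * r ^ n / (1 - r)) atTop (𝓝 0) := by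
    simpa using ((tendsto_pow_atTop_nhds_zero_of_lt_one hr₀ hr).const_mul C).div_const (1 - r)
  rw [Metric.tendstoUniformlyOn_iff]
  intro ε hε
  filter_upwards [hbound.eventually (gt_mem_nhds hε)] with n hn x hx
  rw [dist_comm]
  exact (dist_le_of_le_geometric_of_tendsto r C hr (hstep · x hx) (hlim x hx) n).trans_lt hn

theorem continuousOn_Ici_of_tendstoUniformlyOn_Icc {α β ι : Type*} [TopologicalSpace α]
    [LinearOrder α] [OrderTopology α] [NoMaxOrder α] [UniformSpace β] {p : Filter ι}
    {F : ι → α → β} {G : α → β} {a : α} (hF : ∃ᶠ n in p, ContinuousOn (F n) (Ici a))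
    (h : ∀ M, TendstoUniformlyOn F G p (Icc a M)) : ContinuousOn G (Ici a) := by
  refine TendstoLocallyUniformlyOn.continuousOn ?_ hF
  refine tendstoLocallyUniformlyOn_of_forall_exists_nhds fun x _ => ?_
  obtain ⟨M, hxM⟩ := exists_gt x
  refine ⟨Icc a M, ?_, h M⟩
  rw [← Ici_inter_Iic]
  exact inter_mem_nhdsWithin _ (Iic_mem_nhds hxM)

noncomputable def pcrMap (v x : ℝ) : ℝ := x + v * x / (1 + x)

noncomputable def pcrRescaled (v : ℝ) (n : ℕ) (x : ℝ) : ℝ := (pcrMap v)^[n] (x / (1 + v) ^ n)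

section

variable {v : ℝ}

theorem mapsTo_pcrMap (hv : 0 ≤ v) : MapsTo (pcrMap v) (Ici 0) (Ici 0) := fun x (hx : 0 ≤ x) =>
  show 0 ≤ x + v * x / (1 + x) by positivity

theorem lipschitzOnWith_pcrMap (hv : 0 ≤ v) :
    LipschitzOnWith (Real.toNNReal (1 + v)) (pcrMap v) (Ici 0) := by
  refine LipschitzOnWith.of_dist_le_mul fun x (hx : 0 ≤ x) y (hy : 0 ≤ y) => ?_
  have hslope : pcrMap v x - pcrMap v y = (1 + v / ((1 + x) * (1 + y))) * (x - y) := by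
    unfold pcrMap; field_simp; ring
  have hslope_le : v / ((1 + x) * (1 + y)) ≤ v := div_le_self hv (by nlinarith)
  rw [Real.coe_toNNReal _ (by linarith), Real.dist_eq, Real.dist_eq, hslope, abs_mul,
    abs_of_nonneg (by positivity)]
  gcongr

theorem dist_mul_pcrMap_le (hv : 0 ≤ v) {y : ℝ} (hy : 0 ≤ y) :
    dist ((1 + v) * y) (pcrMap v y) ≤ v * y ^ 2 := by
  have hgap : (1 + v) * y - pcrMap v y = v * y ^ 2 / (1 + y) := by
    unfold pcrMap; field_simp; ring
  rw [Real.dist_eq, hgap, abs_of_nonneg (by positivity)]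
  exact div_le_self (by positivity) (by linarith)

theorem dist_pcrRescaled_succ_le (hv : 0 ≤ v) {x : ℝ} (hx : 0 ≤ x) (n : ℕ) :
    dist (pcrRescaled v n x) (pcrRescaled v (n + 1) x) ≤
      v * x ^ 2 / (1 + v) ^ 2 * ((1 + v)⁻¹) ^ n := by
  set y := x / (1 + v) ^ (n + 1)
  have hb : 0 < 1 + v := by linarith
  have hy : 0 ≤ y := by positivity
  have hscale : x / (1 + v) ^ n = (1 + v) * y := by
    simp only [y]; field_simp; ring
  have hlip := ((lipschitzOnWith_pcrMap hv).iterate (mapsTo_pcrMap hv) n).dist_le_mul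
    ((1 + v) * y) (by simp only [mem_Ici]; positivity) (pcrMap v y) (mapsTo_pcrMap hv hy)
  rw [NNReal.coe_pow, Real.coe_toNNReal _ hb.le] at hlip
  calc dist (pcrRescaled v n x) (pcrRescaled v (n + 1) x)
      = dist ((pcrMap v)^[n] ((1 + v) * y)) ((pcrMap v)^[n] (pcrMap v y)) := by
        rw [pcrRescaled, pcrRescaled, hscale, Function.iterate_succ_apply]
    _ ≤ (1 + v) ^ n * (v * y ^ 2) := hlip.trans (by gcongr; exact dist_mul_pcrMap_le hv hy)
    _ = v * x ^ 2 / (1 + v) ^ 2 * ((1 + v)⁻¹) ^ n := by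
        simp only [y]; rw [inv_pow]; field_simp; ring

theorem tendstoUniformlyOn_pcrRescaled (hv : 0 < v) {H : ℝ → ℝ}
    (hH : ∀ x, 0 ≤ x → Tendsto (fun n => pcrRescaled v n x) atTop (𝓝 (H x))) (M : ℝ) :
    TendstoUniformlyOn (pcrRescaled v) H atTop (Icc 0 M) := by
  refine tendstoUniformlyOn_of_dist_succ_le_geometric (C := v * M ^ 2 / (1 + v) ^ 2)
    (r := (1 + v)⁻¹) (by positivity) (inv_lt_one_of_one_lt₀ (by linarith)) (fun n x hx => ?_)
    (fun x hx => hH x hx.1)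
  obtain ⟨hx0, hxM⟩ := hx
  refine (dist_pcrRescaled_succ_le hv.le hx0 n).trans ?_
  gcongr

theorem continuousOn_pcrRescaled (hv : 0 ≤ v) (n : ℕ) :
    ContinuousOn (pcrRescaled v n) (Ici 0) :=
  ((lipschitzOnWith_pcrMap hv).iterate (mapsTo_pcrMap hv) n).continuousOn.comp
    (continuousOn_id.div_const _) fun x (hx : 0 ≤ x) =>
      show 0 ≤ x / (1 + v) ^ n by positivity

end

/-- For every `v ∈ (0,1]`, the functions `H_n(x) = f^[n](x/b^n)` converge uniformly on
every bounded interval `[0,M]` to `H(x) = lim_n f^[n](x/b^n)`, and consequently `H` is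
continuous on `[0,∞)`. -/
theorem pcr_H_uniform_continuous (v : ℝ) (hv : v ∈ Set.Ioc (0:ℝ) 1)
    (b : ℝ) (hb : b = 1 + v)
    (f : ℝ → ℝ) (hf : ∀ x, f x = x + v * x / (1 + x))
    (H : ℝ → ℝ)
    (hH : ∀ x : ℝ, 0 ≤ x →
      Tendsto (fun n : ℕ => f^[n] (x / b ^ n)) atTop (𝓝 (H x))) :
    (∀ M : ℝ, TendstoUniformlyOn (fun (n : ℕ) (x : ℝ) => f^[n] (x / b ^ n)) H
        atTop (Set.Icc 0 M)) ∧
    ContinuousOn H (Set.Ici 0) := by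
  obtain rfl : f = pcrMap v := funext hf
  subst hb
  have hunif := tendstoUniformlyOn_pcrRescaled hv.1 hH
  exact ⟨hunif, continuousOn_Ici_of_tendstoUniformlyOn_Icc
    (.of_forall (continuousOn_pcrRescaled hv.1.le)) hunif⟩
end

section
/- For every v ∈ (0,1], every n ≥ 0 and every x ≥ 0, one has f_n(x b^{−n}) ≥ x − x². Consequently H(x) := lim_{n→∞} f_n(x/b^n) satisfies H(x) ≥ x − x² > 0 for every x ∈ (0,1). -/
open Set Filter Topology

/-- For every `v ∈ (0,1]`, every `n ≥ 0` and every `x ≥ 0`, one has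
`f^[n](x b^(−n)) ≥ x − x²`. Consequently `H(x) = lim_n f^[n](x/b^n)` satisfies
`H(x) ≥ x − x² > 0` for every `x ∈ (0,1)`. -/
theorem pcr_H_positive (v : ℝ) (hv : v ∈ Set.Ioc (0:ℝ) 1)
    (b : ℝ) (hb : b = 1 + v)
    (f : ℝ → ℝ) (hf : ∀ x, f x = x + v * x / (1 + x))
    (H : ℝ → ℝ)
    (hH : ∀ x : ℝ, 0 ≤ x →
      Tendsto (fun n : ℕ => f^[n] (x / b ^ n)) atTop (𝓝 (H x))) :
    (∀ n : ℕ, ∀ x : ℝ, 0 ≤ x → x - x ^ 2 ≤ f^[n] (x * (b ^ n)⁻¹)) ∧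
    (∀ x ∈ Set.Ioo (0:ℝ) 1, x - x ^ 2 ≤ H x ∧ 0 < x - x ^ 2) := by
  obtain ⟨hv0, hv1⟩ := hv
  have hb1 : 1 < b := by rw [hb]; linarith
  have hbpos : (0:ℝ) < b := by linarith
  -- key invariant
  have key : ∀ n : ℕ, ∀ t : ℝ, 0 ≤ t →
      0 ≤ f^[n] t ∧ f^[n] t ≤ b ^ n * t ∧
        b ^ n * t - (b ^ n * t) ^ 2 / b ≤ f^[n] t := by
    intro n
    induction n with
    | zero =>
      intro t ht
      simp only [Function.iterate_zero, id_eq, pow_zero, one_mul]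
      refine ⟨ht, le_refl _, ?_⟩
      have : 0 ≤ t ^ 2 / b := div_nonneg (sq_nonneg t) hbpos.le
      linarith
    | succ n ih =>
      intro t ht
      obtain ⟨h0, h1, h2⟩ := ih t ht
      rw [Function.iterate_succ_apply']
      set y := f^[n] t with hy
      set u := b ^ n * t with hu
      have hu0 : 0 ≤ u := mul_nonneg (pow_pos hbpos n).le ht
      have hy1 : (0:ℝ) < 1 + y := by linarith
      have hfy : f y = y + v * y / (1 + y) := hf y
      have h5 : 0 ≤ v * y / (1 + y) :=
        div_nonneg (mul_nonneg hv0.le h0) hy1.le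
      have h4 : v * y / (1 + y) ≤ v * y := by
        rw [div_le_iff₀ hy1]
        nlinarith [mul_nonneg (mul_nonneg hv0.le h0) h0]
      have h3 : v * y - v * y ^ 2 ≤ v * y / (1 + y) := by
        rw [le_div_iff₀ hy1]
        nlinarith [mul_nonneg hv0.le (mul_nonneg (mul_nonneg h0 h0) h0)]
      have hpow : b ^ (n + 1) * t = b * u := by rw [pow_succ]; ring
      refine ⟨by rw [hfy]; linarith, ?_, ?_⟩
      · rw [hfy, hpow]
        nlinarith [mul_le_mul_of_nonneg_left h1 hbpos.le]
      · rw [hfy, hpow]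
        have hsq : y ^ 2 ≤ u ^ 2 := by nlinarith
        have hbu : (b * u) ^ 2 / b = b * u ^ 2 := by
          field_simp
        rw [hbu]
        have hby : b * u - u ^ 2 ≤ b * y := by
          have := mul_le_mul_of_nonneg_left h2 hbpos.le
          have hub : u ^ 2 / b * b = u ^ 2 := div_mul_cancel₀ _ hbpos.ne'
          nlinarith
        have hvy : v * y ^ 2 ≤ v * u ^ 2 := mul_le_mul_of_nonneg_left hsq hv0.le
        rw [hb]
        rw [hb] at hby
        linarith
  have part1 : ∀ n : ℕ, ∀ x : ℝ, 0 ≤ x → x - x ^ 2 ≤ f^[n] (x * (b ^ n)⁻¹) := by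
    intro n x hx
    have hbn : (0:ℝ) < b ^ n := pow_pos hbpos n
    have ht : 0 ≤ x * (b ^ n)⁻¹ := mul_nonneg hx (inv_nonneg.mpr hbn.le)
    obtain ⟨-, -, h2⟩ := key n (x * (b ^ n)⁻¹) ht
    have hxx : b ^ n * (x * (b ^ n)⁻¹) = x := by field_simp
    rw [hxx] at h2
    have : x ^ 2 / b ≤ x ^ 2 := div_le_self (sq_nonneg x) hb1.le
    linarith
  refine ⟨part1, fun x hx => ?_⟩
  have hpos : 0 < x - x ^ 2 := by nlinarith [hx.1, hx.2]
  refine ⟨?_, hpos⟩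
  refine ge_of_tendsto' (hH x hx.1.le) fun n => ?_
  rw [div_eq_mul_inv]
  exact part1 n x hx.1.le
end

section
/- For every v ∈ (0,1], the function H(x) := lim_{n→∞} f_n(x/b^n) is strictly increasing on [0,∞); in particular H is injective on [0,∞). -/
open Set Filter Topology

/-- For every `v ∈ (0,1]`, the function `H(x) = lim_n f^[n](x/b^n)` is strictly
increasing on `[0,∞)`; in particular `H` is injective on `[0,∞)`. -/
theorem pcr_H_strictMono (v : ℝ) (hv : v ∈ Set.Ioc (0:ℝ) 1)
    (b : ℝ) (hb : b = 1 + v)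
    (f : ℝ → ℝ) (hf : ∀ x, f x = x + v * x / (1 + x))
    (H : ℝ → ℝ)
    (hH : ∀ x : ℝ, 0 ≤ x →
      Tendsto (fun n : ℕ => f^[n] (x / b ^ n)) atTop (𝓝 (H x))) :
    StrictMonoOn H (Set.Ici 0) ∧ Set.InjOn H (Set.Ici 0) := by
  obtain ⟨hv0, hv1⟩ := hv
  have hb1 : (1:ℝ) < b := by rw [hb]; linarith
  have hb0 : (0:ℝ) < b := by linarith
  -- positivity of f on positives
  have hfpos : ∀ t : ℝ, 0 < t → 0 < f t := by
    intro t ht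
    have h1 : (0:ℝ) < 1 + t := by linarith
    have h2 : 0 < v * t / (1 + t) := by positivity
    rw [hf]; linarith
  -- monotonicity of f on positives
  have hmono : ∀ s t : ℝ, 0 < s → s ≤ t → f s ≤ f t := by
    intro s t hs hst
    have h1 : (0:ℝ) < 1 + s := by linarith
    have h2 : (0:ℝ) < 1 + t := by linarith
    have : v * s / (1 + s) ≤ v * t / (1 + t) := by
      rw [div_le_div_iff₀ h1 h2]; nlinarith
    rw [hf, hf]; linarith
  -- key reciprocal identity
  have hrec : ∀ t : ℝ, 0 < t → 1 / f t = 1 / (b * t) + v / (b * (b + t)) := by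
    intro t ht
    have h1 : (0:ℝ) < 1 + t := by linarith
    have h2 : 0 < f t := hfpos t ht
    have hft : f t ≠ 0 := ne_of_gt h2
    have hbt : b + t ≠ 0 := by positivity
    rw [hf] at hft ⊢
    rw [hb] at hbt ⊢
    field_simp
    ring
  -- the main induction: positivity, monotonicity and reciprocal gap growth
  have key : ∀ n : ℕ, ∀ s t : ℝ, 0 < s → s ≤ t →
      0 < f^[n] s ∧ f^[n] s ≤ f^[n] t ∧
      1 / s - 1 / t ≤ b ^ n * (1 / f^[n] s - 1 / f^[n] t) := by
    intro n
    induction n with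
    | zero => intro s t hs hst; simpa using ⟨hs, hst⟩
    | succ n ih =>
      intro s t hs hst
      obtain ⟨hA, hAC, hineq⟩ := ih s t hs hst
      have hC : 0 < f^[n] t := lt_of_lt_of_le hA hAC
      set A := f^[n] s with hAdef
      set C := f^[n] t with hCdef
      have hA' : 0 < f A := hfpos A hA
      have hC' : 0 < f C := hfpos C hC
      have hAC' : f A ≤ f C := hmono A C hA hAC
      have e1 : 1 / f A = 1 / (b * A) + v / (b * (b + A)) := hrec A hA
      have e2 : 1 / f C = 1 / (b * C) + v / (b * (b + C)) := hrec C hC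
      have hv2 : v / (b * (b + C)) ≤ v / (b * (b + A)) :=
        div_le_div_of_nonneg_left (le_of_lt hv0) (by positivity) (by nlinarith)
      have e3 : 1 / (b * A) - 1 / (b * C) = (1 / b) * (1 / A - 1 / C) := by
        field_simp
      have step : (1 / b) * (1 / A - 1 / C) ≤ 1 / f A - 1 / f C := by
        rw [e1, e2]; linarith [e3]
      refine ⟨?_, ?_, ?_⟩
      · rw [Function.iterate_succ_apply']; exact hA'
      · rw [Function.iterate_succ_apply', Function.iterate_succ_apply']; exact hAC'
      · rw [Function.iterate_succ_apply', Function.iterate_succ_apply']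
        have hbn : (0:ℝ) < b ^ n := by positivity
        have h5 : b ^ n * (1 / A - 1 / C) = b ^ (n+1) * ((1 / b) * (1 / A - 1 / C)) := by
          rw [pow_succ]; field_simp
        have h6 : b ^ (n+1) * ((1 / b) * (1 / A - 1 / C)) ≤
            b ^ (n+1) * (1 / f A - 1 / f C) :=
          mul_le_mul_of_nonneg_left step (le_of_lt (pow_pos hb0 (n+1)))
        linarith
  -- uniform upper bound for reciprocal of iterates
  have ub : ∀ n : ℕ, ∀ t : ℝ, 0 < t → 1 / f^[n] t ≤ 1 / (b ^ n * t) + 1 / b := by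
    intro n
    induction n with
    | zero =>
      intro t ht
      simp only [Function.iterate_zero_apply, pow_zero, one_mul]
      have : (0:ℝ) < 1 / b := by positivity
      linarith
    | succ n ih =>
      intro t ht
      have hA : 0 < f^[n] t := (key n t t ht le_rfl).1
      set A := f^[n] t with hAdef
      have hbn : (0:ℝ) < b ^ n := by positivity
      have e1 : 1 / f A = 1 / (b * A) + v / (b * (b + A)) := hrec A hA
      have h1 : v / (b * (b + A)) ≤ v / (b * b) :=
        div_le_div_of_nonneg_left (le_of_lt hv0) (by positivity) (by nlinarith)
      have h2 : 1 / (b * A) = (1 / b) * (1 / A) := by field_simp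
      have h3 : 1 / A ≤ 1 / (b ^ n * t) + 1 / b := ih t ht
      have h4 : (1 / b) * (1 / A) ≤ (1 / b) * (1 / (b ^ n * t)) + (1 / b) * (1 / b) := by
        have := mul_le_mul_of_nonneg_left h3 (le_of_lt (by positivity : (0:ℝ) < 1 / b))
        linarith [mul_add (1 / b) (1 / (b ^ n * t)) (1 / b), this]
      have h5 : (1 / b) * (1 / (b ^ n * t)) = 1 / (b ^ (n+1) * t) := by
        rw [pow_succ]; rw [one_div, one_div, one_div, ← mul_inv]; ring
      have h6 : (1 / b) * (1 / b) + v / (b * b) = 1 / b := by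
        rw [hb]; field_simp
      rw [Function.iterate_succ_apply', ← hAdef, e1]
      linarith
  -- uniform positive lower bound for iterates, hence for H
  have Hlb : ∀ x : ℝ, 0 < x → 1 / (1 / x + 1 / b) ≤ H x := by
    intro x hx
    apply ge_of_tendsto (hH x (le_of_lt hx))
    filter_upwards with n
    have hxn : 0 < x / b ^ n := by positivity
    have hA : 0 < f^[n] (x / b ^ n) := (key n _ _ hxn le_rfl).1
    have h1 : 1 / f^[n] (x / b ^ n) ≤ 1 / (b ^ n * (x / b ^ n)) + 1 / b := ub n _ hxn
    have hbn : (0:ℝ) < b ^ n := by positivity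
    have h2 : b ^ n * (x / b ^ n) = x := by field_simp
    rw [h2] at h1
    have hA1 : (0:ℝ) < 1 / f^[n] (x / b ^ n) := by positivity
    have := one_div_le_one_div_of_le hA1 h1
    rwa [one_div_one_div] at this
  -- H 0 = 0
  have hH0 : H 0 = 0 := by
    have hf0 : f 0 = 0 := by rw [hf]; norm_num
    have hconst : Tendsto (fun n : ℕ => f^[n] ((0:ℝ) / b ^ n)) atTop (𝓝 0) := by
      have heq : ∀ n : ℕ, f^[n] ((0:ℝ) / b ^ n) = 0 := by
        intro n
        rw [zero_div, Function.iterate_fixed hf0]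
      simp only [heq]
      exact tendsto_const_nhds
    exact tendsto_nhds_unique (hH 0 le_rfl) hconst
  -- strict monotonicity
  have hsm : StrictMonoOn H (Set.Ici 0) := by
    intro x hx y hy hxy
    rcases eq_or_lt_of_le (show (0:ℝ) ≤ x from hx) with h0 | h0
    · -- x = 0
      rw [← h0, hH0]
      have hy0 : 0 < y := by rw [← h0] at hxy; exact hxy
      have hly := Hlb y hy0
      have : (0:ℝ) < 1 / (1 / y + 1 / b) := by positivity
      linarith
    · -- 0 < x < y
      have hy0 : 0 < y := lt_trans h0 hxy
      have hHx : 0 < H x := lt_of_lt_of_le (by positivity) (Hlb x h0)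
      have hHy : 0 < H y := lt_of_lt_of_le (by positivity) (Hlb y hy0)
      have hgap : 1 / x - 1 / y ≤ 1 / H x - 1 / H y := by
        have hlim : Tendsto (fun n : ℕ =>
            1 / f^[n] (x / b ^ n) - 1 / f^[n] (y / b ^ n)) atTop
            (𝓝 (1 / H x - 1 / H y)) := by
          apply Tendsto.sub
          · simpa [one_div] using ((hH x (le_of_lt h0)).inv₀ (ne_of_gt hHx))
          · simpa [one_div] using ((hH y (le_of_lt hy0)).inv₀ (ne_of_gt hHy))
        apply ge_of_tendsto hlim
        filter_upwards with n
        have hbn : (0:ℝ) < b ^ n := by positivity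
        have hxn : 0 < x / b ^ n := by positivity
        have hyn : x / b ^ n ≤ y / b ^ n := by gcongr
        have h3 := (key n _ _ hxn hyn).2.2
        have hx0 : x ≠ 0 := ne_of_gt h0
        have hy0' : y ≠ 0 := ne_of_gt hy0
        have e1 : 1 / (x / b ^ n) = b ^ n * (1 / x) := by field_simp
        have e2 : 1 / (y / b ^ n) = b ^ n * (1 / y) := by field_simp
        rw [e1, e2] at h3
        have h4 : b ^ n * (1 / x - 1 / y) ≤
            b ^ n * (1 / f^[n] (x / b ^ n) - 1 / f^[n] (y / b ^ n)) := by
          linarith [mul_sub (b ^ n) (1 / x) (1 / y)]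
        exact le_of_mul_le_mul_left h4 hbn
      have hxyrec : 0 < 1 / x - 1 / y := by
        have : 1 / y < 1 / x := one_div_lt_one_div_of_lt h0 hxy
        linarith
      have hlt : 1 / H y < 1 / H x := by linarith
      have := (div_lt_div_iff₀ hHy hHx).mp hlt
      linarith
  exact ⟨hsm, hsm.injOn⟩
end

section
/- For every v ∈ (0,1], every x ≥ 0, and every sequence (r_n) of nonnegative reals such that b^n r_n → x as n → ∞ (i.e. r_n = x/b^n + o(b^{−n})), one has f_n(r_n) → H(x) as n → ∞. -/
open Set Filter Topology

/-- For every `v ∈ (0,1]`, every `x ≥ 0`, and every sequence `(r_n)` of nonnegative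
reals such that `b^n r_n → x` as `n → ∞` (i.e. `r_n = x/b^n + o(b^(−n))`), one has
`f^[n](r_n) → H(x)` as `n → ∞`. -/
theorem pcr_H_of_perturbed (v : ℝ) (hv : v ∈ Set.Ioc (0:ℝ) 1)
    (b : ℝ) (hb : b = 1 + v)
    (f : ℝ → ℝ) (hf : ∀ x, f x = x + v * x / (1 + x))
    (H : ℝ → ℝ)
    (hH : ∀ x : ℝ, 0 ≤ x →
      Tendsto (fun n : ℕ => f^[n] (x / b ^ n)) atTop (𝓝 (H x))) :
    ∀ x : ℝ, 0 ≤ x → ∀ r : ℕ → ℝ, (∀ n, 0 ≤ r n) →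
      Tendsto (fun n : ℕ => b ^ n * r n) atTop (𝓝 x) →
      Tendsto (fun n : ℕ => f^[n] (r n)) atTop (𝓝 (H x)) := by
  intro x hx r hr hbr
  have hv0 : 0 < v := hv.1
  have hb0 : 0 < b := by rw [hb]; linarith
  -- nonnegativity preservation
  have hpos : ∀ a : ℝ, 0 ≤ a → 0 ≤ f a := by
    intro a ha
    rw [hf]
    have : (0:ℝ) ≤ v * a / (1 + a) := by positivity
    linarith
  -- Lipschitz bound with constant b on [0,∞)
  have hlip : ∀ a c : ℝ, 0 ≤ a → 0 ≤ c → |f a - f c| ≤ b * |a - c| := by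
    intro a c ha hc
    have h1a : (0:ℝ) < 1 + a := by linarith
    have h1c : (0:ℝ) < 1 + c := by linarith
    have key : f a - f c = (a - c) * (1 + v / ((1 + a) * (1 + c))) := by
      rw [hf, hf]; field_simp; ring
    rw [key, abs_mul]
    have hfac0 : 0 ≤ 1 + v / ((1 + a) * (1 + c)) := by positivity
    rw [abs_of_nonneg hfac0]
    have hfacb : 1 + v / ((1 + a) * (1 + c)) ≤ b := by
      rw [hb]
      have h1 : (1:ℝ) ≤ (1 + a) * (1 + c) := by nlinarith
      have : v / ((1 + a) * (1 + c)) ≤ v := by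
        rw [div_le_iff₀ (by linarith)]
        nlinarith
      linarith
    calc |a - c| * (1 + v / ((1 + a) * (1 + c))) ≤ |a - c| * b :=
          mul_le_mul_of_nonneg_left hfacb (abs_nonneg _)
      _ = b * |a - c| := mul_comm _ _
  -- iterate bounds
  have hiter : ∀ (n : ℕ) (a c : ℝ), 0 ≤ a → 0 ≤ c →
      0 ≤ f^[n] a ∧ 0 ≤ f^[n] c ∧ |f^[n] a - f^[n] c| ≤ b ^ n * |a - c| := by
    intro n
    induction n with
    | zero => intro a c ha hc; simpa using ⟨ha, hc⟩
    | succ n ih =>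
      intro a c ha hc
      obtain ⟨h1, h2, h3⟩ := ih a c ha hc
      refine ⟨?_, ?_, ?_⟩
      · rw [Function.iterate_succ_apply']; exact hpos _ h1
      · rw [Function.iterate_succ_apply']; exact hpos _ h2
      · rw [Function.iterate_succ_apply', Function.iterate_succ_apply']
        calc |f (f^[n] a) - f (f^[n] c)| ≤ b * |f^[n] a - f^[n] c| := hlip _ _ h1 h2
          _ ≤ b * (b ^ n * |a - c|) := mul_le_mul_of_nonneg_left h3 hb0.le
          _ = b ^ (n + 1) * |a - c| := by ring
  -- difference tends to 0
  have hx' : ∀ n : ℕ, 0 ≤ x / b ^ n := fun n => by positivity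
  have hdiff : Tendsto (fun n : ℕ => f^[n] (r n) - f^[n] (x / b ^ n)) atTop (𝓝 0) := by
    have hbound : ∀ n : ℕ, ‖f^[n] (r n) - f^[n] (x / b ^ n)‖ ≤ |b ^ n * r n - x| := by
      intro n
      have h := (hiter n (r n) (x / b ^ n) (hr n) (hx' n)).2.2
      have hbn : (0:ℝ) < b ^ n := by positivity
      have heq : b ^ n * (r n - x / b ^ n) = b ^ n * r n - x := by
        field_simp
      have : b ^ n * |r n - x / b ^ n| = |b ^ n * r n - x| := by
        rw [← abs_of_pos hbn, ← abs_mul, abs_of_pos hbn, heq]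
      rw [Real.norm_eq_abs]
      calc |f^[n] (r n) - f^[n] (x / b ^ n)| ≤ b ^ n * |r n - x / b ^ n| := h
        _ = |b ^ n * r n - x| := this
    have hzero : Tendsto (fun n : ℕ => |b ^ n * r n - x|) atTop (𝓝 0) := by
      have := hbr.sub (tendsto_const_nhds (x := x))
      simpa using this.abs
    exact squeeze_zero_norm hbound hzero
  have := hdiff.add (hH x hx)
  simpa using this
end
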